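/- If U is a square-free word in the letters a1, a2, a3 (i.e., U contains no factor of the form YY with Y a nonempty word), then L·U ≠ 0 in the semigroup H. -/

import Mathlib

inductive Phi
  | L | M | P | Q | R | g | s1 | s2 | t1 | t2 | t3 | a1 | a2 | a3
deriving DecidableEq

open Phi

abbrev W0 := WithZero (FreeMonoid Phi)

def w (l : List Phi) : W0 := ((FreeMonoid.ofList l : FreeMonoid Phi) : W0)

def ai : Fin 3 → Phi
  | 0 => a1 | 1 => a2 | 2 => a3

def ti : Fin 3 → Phi
  | 0 => t1 | 1 => t2 | 2 => t3

def si : Fin 2 → Phi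
  | 0 => s1 | 1 => s2

/-- `x` is one of the letters `a1, a2, a3`. -/
def isA (x : Phi) : Prop := x = a1 ∨ x = a2 ∨ x = a3

/-- The defining relations (1)–(14) of the semigroup `H`. -/
inductive rel : W0 → W0 → Prop
  | r1L (x : Phi) : rel (w [x, L]) 0
  | r1M (x : Phi) : rel (w [x, M]) 0
  | r2 : rel (w [L]) (w [M, P, g])
  | r3 (i : Fin 3) : rel (w [g, ai i]) (w [ai i, g])
  | r4 (x : Phi) (h : ¬ isA x) : rel (w [g, x]) 0
  | r5 (i j : Fin 3) : rel (w [ai i, g, ai j]) (w [ai i, R, s1, Q, ai j])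
  | r6 (i : Fin 3) (x : Phi) (h : x = R ∨ isA x) : rel (w [ti i, x]) (w [x, ti i])
  | r7 (i : Fin 3) : rel (w [P, ai i, ti i]) (w [ai i, P, s1])
  | r8 (i j : Fin 3) (h : i ≠ j) : rel (w [P, ai j, ti i]) (w [ai j, P, s2])
  | r9 (i : Fin 3) (j : Fin 2) : rel (w [si j, ai i]) (w [ai i, si j])
  | r10 : rel (w [s1, R]) (w [R, s1])
  | r11 (i : Fin 3) : rel (w [s1, Q, ai i]) (w [ti i, ai i, Q])
  | r12 : rel (w [P, R, s1]) 0
  | r13 (i : Fin 3) : rel (w [s2, R, ai i]) (w [ai i, s2, R])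
  | r14 (i : Fin 3) : rel (w [s2, R, Q, ai i]) (w [R, ti i, ai i, Q])

/-- The congruence on the free monoid with zero generated by the relations. -/
def hCon : Con W0 := conGen rel

/-- The semigroup (with zero) `H` of the paper. -/
abbrev H := hCon.Quotient

/-- The quotient map. -/
def q : W0 →* H := hCon.mk'

/-- `l` is a word in the letters `a1, a2, a3`. -/
def Aword (l : List Phi) : Prop := ∀ x ∈ l, isA x

/-- `l` is square-free: it contains no factor `Y ++ Y` with `Y` nonempty. -/
def SqFree (l : List Phi) : Prop := ∀ Y : List Phi, Y ≠ [] → ¬ (Y ++ Y) <:+: l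

/-!
Call a word *good* if it is `L U` or has one of the shapes below, where `U = U₀ U₁ U₂ U₃`:
`M U₀ P U₁ g U₂`; `M U₀ P A τ B Q U₃` with `A B = U₁ R U₂` and a token `τ ∈ {s1, t1, t2, t3}`;
`M U₀ P A s2 B R U₂ Q U₃` with `A B = U₁`. A good word other than `L U` contains exactly one of
the letters `g, s1, s2, tᵢ`, and this letter determines its shape. So applying a relation in
either direction inside a good word is a local move between known shapes, and no good word
contains the left-hand side of a relation with right-hand side `0`. Hence the good words form a union of congruence classes not containing
`0`, and `L U ≠ 0`.

The only real danger is `P R s1` (relation (12)), i.e. the block `U₁` between `P` and `R` running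
empty. The block loses its first letter only when `tᵢ` reaches `P` (relation (7)), and `tᵢ` was
created when `Q` passed a letter `aᵢ` (relation (11)); so `U₁` can run empty only if it reappears
in `U` directly after the position of `Q`. The conditions `Adm` and `TAdm` record that this does
not happen, and when `R` is created (relations (5) and (14)) that is exactly square-freeness of `U`.
-/

namespace Con

variable {N : Type*} [Monoid N]

def syntactic (S : Set N) : Con N where
  r a b := ∀ x y, x * a * y ∈ S ↔ x * b * y ∈ S
  iseqv := ⟨fun _ _ _ => Iff.rfl, fun h x y => (h x y).symm,
    fun h₁ h₂ x y => (h₁ x y).trans (h₂ x y)⟩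
  mul' {a b c d} hab hcd x y := by
    have h₁ := hab x (c * y)
    have h₂ := hcd (x * b) y
    simp only [mul_assoc] at h₁ h₂ ⊢
    exact h₁.trans h₂

theorem mem_iff_of_conGen {r : N → N → Prop} {S : Set N}
    (hr : ∀ u v, r u v → ∀ x y, x * u * y ∈ S ↔ x * v * y ∈ S) {a b : N} (hab : conGen r a b) :
    a ∈ S ↔ b ∈ S := by
  simpa using (conGen_le.mpr hr : conGen r ≤ syntactic S) hab 1 1

end Con

namespace List

variable {α : Type*} {p : α} {xl yl s A B X Y : List α}

theorem eq_of_append_cons_eq_of_notMem (h : xl ++ p :: yl = X ++ p :: Y) (hX : p ∉ X)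
    (hY : p ∉ Y) : xl = X ∧ yl = Y := by
  obtain ⟨h₁, -, h₂⟩ := (append_cons_inj_of_notMem hX hY).mp h.symm
  exact ⟨h₁.symm, h₂.symm⟩

theorem exists_eq_append_of_append_eq (h : xl ++ s = X ++ p :: A) (hp : p ∉ s) :
    ∃ A', A = A' ++ s ∧ xl = X ++ p :: A' := by
  rcases append_eq_append_iff.mp h with ⟨_, -, rfl⟩ | ⟨bs, rfl, hA⟩
  · simp at hp
  · rcases cons_eq_append_iff.mp hA with ⟨rfl, rfl⟩ | ⟨A', rfl, rfl⟩
    · simp at hp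
    · exact ⟨A', rfl, rfl⟩

theorem exists_eq_append_of_append_eq' (h : s ++ yl = B ++ p :: Y) (hp : p ∉ s) :
    ∃ B', B = s ++ B' ∧ yl = B' ++ p :: Y := by
  have h' : yl.reverse ++ s.reverse = Y.reverse ++ p :: B.reverse := by
    simpa using congrArg reverse h
  obtain ⟨A', hA', hyl⟩ := exists_eq_append_of_append_eq h' (by simpa using hp)
  refine ⟨A'.reverse, ?_, ?_⟩
  · simpa using congrArg reverse hA'
  · simpa using congrArg reverse hyl

end List

namespace H

variable {U V W l xl yl : List Phi} {a b x t : Phi}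
  {adm : List Phi → List Phi → List Phi → Prop}

instance : DecidablePred isA := fun x => inferInstanceAs (Decidable (x = a1 ∨ x = a2 ∨ x = a3))

def IsFrame (x : Phi) : Prop := x = P ∨ x = Q ∨ x = R ∨ isA x

instance : DecidablePred IsFrame := fun x =>
  inferInstanceAs (Decidable (x = P ∨ x = Q ∨ x = R ∨ isA x))

def IsToken (t : Phi) : Prop := t = g ∨ t = s1 ∨ t = s2 ∨ t = t1 ∨ t = t2 ∨ t = t3

theorem IsToken.not_isFrame (ht : IsToken t) : ¬ IsFrame t ∧ t ≠ M ∧ t ≠ L := by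
  rcases ht with rfl | rfl | rfl | rfl | rfl | rfl <;> decide

theorem isA_ai (i : Fin 3) : isA (ai i) := by fin_cases i <;> decide

theorem isToken_ti (i : Fin 3) : IsToken (ti i) := by fin_cases i <;> simp [IsToken, ti]

theorem ti_ne (i : Fin 3) : ti i ≠ L ∧ ti i ≠ M ∧ ti i ≠ g ∧ ti i ≠ s1 ∧ ti i ≠ s2 := by
  fin_cases i <;> decide

theorem ai_injective : Function.Injective ai := by
  intro i j h; fin_cases i <;> fin_cases j <;> simp_all [ai]

theorem ti_injective : Function.Injective ti := by
  intro i j h; fin_cases i <;> fin_cases j <;> simp_all [ti]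

theorem ne_of_isA (ha : isA a) (hx : ¬ isA x) : x ≠ a := by
  rintro rfl; exact hx ha

theorem notMem_singleton_of_isA (ha : isA a) (hx : ¬ isA x) : x ∉ [a] :=
  fun h => ne_of_isA ha hx (List.mem_singleton.mp h)

theorem aword_append : Aword (V ++ W) ↔ Aword V ∧ Aword W := List.forall_mem_append

theorem notMem_of_aword (hV : Aword V) (hx : ¬ isA x) : x ∉ V := fun h => hx (hV x h)

def Adm (V W : List Phi) : Prop := V ≠ [] ∧ ¬ V <+: W

theorem Adm.of_cons (h : Adm (a :: V) (a :: W)) : Adm V W :=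
  ⟨by rintro rfl; exact h.2 (by simp), fun hp => h.2 ((List.prefix_cons_inj a).mpr hp)⟩

theorem Adm.cons (h : Adm V W) (a : Phi) : Adm (a :: V) (a :: W) :=
  ⟨List.cons_ne_nil _ _, fun hp => h.2 ((List.prefix_cons_inj a).mp hp)⟩

theorem adm_cons_cons_of_ne (hab : a ≠ b) : Adm (a :: V) (b :: W) :=
  ⟨List.cons_ne_nil _ _, fun hp => hab (List.cons_prefix_cons.mp hp).1⟩

theorem adm_of_sqFree (hsf : SqFree U) (hV : V ≠ []) (h : V ++ W <:+: U) : Adm V W :=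
  ⟨hV, fun hp => hsf V hV (((List.prefix_append_right_inj V).mpr hp).isInfix.trans h)⟩

/-- The clauses keep `Adm` true after `tᵢ` meets `P` through (7) and after it turns back
through (11), and keep `U₁ U₂` nonempty after it meets `P` through (8). -/
def TAdm (a : Phi) (U₁ U₂ U₃ : List Phi) : Prop :=
  U₁ ≠ [] ∧ (∀ V, U₁ = a :: V → Adm V U₃) ∧ (∀ V, U₂ = V ++ [a] → Adm U₁ (a :: U₃)) ∧
    ∀ y, U₁ ++ U₂ = [y] → y = a

def IsGWord (U l : List Phi) : Prop :=
  ∃ U₀ U₁ U₂, U₀ ++ U₁ ++ U₂ = U ∧ l = (M :: U₀ ++ P :: U₁) ++ g :: U₂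

def IsTokWord (U : List Phi) (t : Phi) (adm : List Phi → List Phi → List Phi → Prop)
    (l : List Phi) : Prop :=
  ∃ U₀ U₁ U₂ U₃ A B, U₀ ++ U₁ ++ U₂ ++ U₃ = U ∧ A ++ B = U₁ ++ R :: U₂ ∧ adm U₁ U₂ U₃ ∧
    l = (M :: U₀ ++ P :: A) ++ t :: (B ++ Q :: U₃)

abbrev IsS1Word (U l : List Phi) : Prop := IsTokWord U s1 (fun U₁ _ U₃ => Adm U₁ U₃) l

abbrev IsTWord (U : List Phi) (i : Fin 3) (l : List Phi) : Prop :=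
  IsTokWord U (ti i) (TAdm (ai i)) l

def IsS2Word (U l : List Phi) : Prop :=
  ∃ U₀ A B U₂ U₃, U₀ ++ A ++ B ++ U₂ ++ U₃ = U ∧ A ++ B ++ U₂ ≠ [] ∧
    l = (M :: U₀ ++ P :: A) ++ s2 :: (B ++ R :: (U₂ ++ Q :: U₃))

def Good (U l : List Phi) : Prop :=
  l = L :: U ∨ IsGWord U l ∨ IsS1Word U l ∨ (∃ i, IsTWord U i l) ∨ IsS2Word U l

theorem notMem_of_append_eq {U₁ U₂ A B : List Phi} (h₁ : Aword U₁) (h₂ : Aword U₂)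
    (hAB : A ++ B = U₁ ++ R :: U₂) (hxR : x ≠ R) (hx : ¬ isA x) : x ∉ A ∧ x ∉ B := by
  have : x ∉ U₁ ++ R :: U₂ := by simp [hxR, notMem_of_aword h₁ hx, notMem_of_aword h₂ hx]
  rwa [← hAB, List.mem_append, not_or] at this

theorem isGWord_append_g_iff (hU : Aword U) :
    IsGWord U (xl ++ g :: yl) ↔ ∃ U₀ U₁, U₀ ++ U₁ ++ yl = U ∧ xl = M :: U₀ ++ P :: U₁ := by
  constructor
  · rintro ⟨U₀, U₁, U₂, rfl, h⟩
    simp only [aword_append] at hU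
    obtain ⟨⟨h₀, h₁⟩, h₂⟩ := hU
    obtain ⟨rfl, rfl⟩ := List.eq_of_append_cons_eq_of_notMem h
      (by simp [isA, notMem_of_aword h₀, notMem_of_aword h₁]) (notMem_of_aword h₂ (by decide))
    exact ⟨U₀, U₁, rfl, rfl⟩
  · rintro ⟨U₀, U₁, hdec, rfl⟩
    exact ⟨U₀, U₁, yl, hdec, rfl⟩

theorem isTokWord_append_iff (hU : Aword U) (ht : IsToken t) :
    IsTokWord U t adm (xl ++ t :: yl) ↔
      ∃ U₀ U₁ U₂ U₃ A B, U₀ ++ U₁ ++ U₂ ++ U₃ = U ∧ A ++ B = U₁ ++ R :: U₂ ∧ adm U₁ U₂ U₃ ∧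
        xl = M :: U₀ ++ P :: A ∧ yl = B ++ Q :: U₃ := by
  constructor
  · rintro ⟨U₀, U₁, U₂, U₃, A, B, rfl, hAB, hadm, h⟩
    simp only [aword_append] at hU
    obtain ⟨⟨⟨h₀, h₁⟩, h₂⟩, h₃⟩ := hU
    obtain ⟨hfr, hM, -⟩ := ht.not_isFrame
    simp only [IsFrame, not_or] at hfr
    obtain ⟨hP, hQ, hR, hA⟩ := hfr
    have hmid := notMem_of_append_eq h₁ h₂ hAB hR hA
    obtain ⟨rfl, rfl⟩ := List.eq_of_append_cons_eq_of_notMem h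
      (by simp [hM, hP, hmid.1, notMem_of_aword h₀ hA])
      (by simp [hQ, hmid.2, notMem_of_aword h₃ hA])
    exact ⟨U₀, U₁, U₂, U₃, A, B, rfl, hAB, hadm, rfl, rfl⟩
  · rintro ⟨U₀, U₁, U₂, U₃, A, B, hdec, hAB, hadm, rfl, rfl⟩
    exact ⟨U₀, U₁, U₂, U₃, A, B, hdec, hAB, hadm, rfl⟩

theorem isS2Word_append_s2_iff (hU : Aword U) :
    IsS2Word U (xl ++ s2 :: yl) ↔
      ∃ U₀ A B U₂ U₃, U₀ ++ A ++ B ++ U₂ ++ U₃ = U ∧ A ++ B ++ U₂ ≠ [] ∧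
        xl = M :: U₀ ++ P :: A ∧ yl = B ++ R :: (U₂ ++ Q :: U₃) := by
  constructor
  · rintro ⟨U₀, A, B, U₂, U₃, rfl, hne, h⟩
    simp only [aword_append] at hU
    obtain ⟨⟨⟨⟨h₀, hA⟩, hB⟩, h₂⟩, h₃⟩ := hU
    obtain ⟨rfl, rfl⟩ := List.eq_of_append_cons_eq_of_notMem h
      (by simp [isA, notMem_of_aword h₀, notMem_of_aword hA])
      (by simp [isA, notMem_of_aword hB, notMem_of_aword h₂, notMem_of_aword h₃])
    exact ⟨U₀, A, B, U₂, U₃, rfl, hne, rfl, rfl⟩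
  · rintro ⟨U₀, A, B, U₂, U₃, hdec, hne, rfl, rfl⟩
    exact ⟨U₀, A, B, U₂, U₃, hdec, hne, rfl⟩

theorem IsGWord.exists_cons (hU : Aword U) (h : IsGWord U l) :
    ∃ b, l = M :: b ∧ ∀ x ∈ b, x = g ∨ IsFrame x := by
  obtain ⟨U₀, U₁, U₂, rfl, rfl⟩ := h
  refine ⟨U₀ ++ P :: U₁ ++ g :: U₂, rfl, fun x hx => ?_⟩
  have := fun h => hU x h
  simp only [List.mem_append, List.mem_cons] at hx this
  unfold IsFrame
  tauto

theorem IsTokWord.exists_cons (hU : Aword U) (h : IsTokWord U t adm l) :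
    ∃ b, l = M :: b ∧ ∀ x ∈ b, x = t ∨ IsFrame x := by
  obtain ⟨U₀, U₁, U₂, U₃, A, B, rfl, hAB, -, rfl⟩ := h
  refine ⟨U₀ ++ P :: A ++ t :: (B ++ Q :: U₃), rfl, fun x hx => ?_⟩
  have := fun h => hU x h
  have hmid : x ∈ A ∨ x ∈ B → x ∈ U₁ ++ R :: U₂ := fun h => hAB ▸ List.mem_append.mpr h
  simp only [List.mem_append, List.mem_cons] at hx this hmid
  unfold IsFrame
  tauto

theorem IsS2Word.exists_cons (hU : Aword U) (h : IsS2Word U l) :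
    ∃ b, l = M :: b ∧ ∀ x ∈ b, x = s2 ∨ IsFrame x := by
  obtain ⟨U₀, A, B, U₂, U₃, rfl, -, rfl⟩ := h
  refine ⟨U₀ ++ P :: A ++ s2 :: (B ++ R :: (U₂ ++ Q :: U₃)), rfl, fun x hx => ?_⟩
  have := fun h => hU x h
  simp only [List.mem_append, List.mem_cons] at hx this
  unfold IsFrame
  tauto

theorem Good.mem_cases (hU : Aword U) (h : Good U l) (hx : x ∈ l) :
    (x = L ∧ l = L :: U) ∨ x = M ∨ IsFrame x ∨ (x = g ∧ IsGWord U l) ∨ (x = s1 ∧ IsS1Word U l) ∨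
      (∃ i, x = ti i ∧ IsTWord U i l) ∨ (x = s2 ∧ IsS2Word U l) := by
  have key : ∀ b t, l = M :: b → (∀ y ∈ b, y = t ∨ IsFrame y) → x = M ∨ x = t ∨ IsFrame x :=
    fun b t hl hb => by
      rw [hl, List.mem_cons] at hx
      exact hx.imp_right (hb x)
  rcases h with rfl | h | h | ⟨i, h⟩ | h
  · rcases List.mem_cons.mp hx with hx | hx
    · exact Or.inl ⟨hx, rfl⟩
    · exact Or.inr (Or.inr (Or.inl (Or.inr (Or.inr (Or.inr (hU x hx))))))
  · obtain ⟨b, hl, hb⟩ := h.exists_cons hU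
    rcases key b _ hl hb with hx | hx | hx <;> tauto
  · obtain ⟨b, hl, hb⟩ := h.exists_cons hU
    rcases key b _ hl hb with hx | hx | hx <;> tauto
  · obtain ⟨b, hl, hb⟩ := h.exists_cons hU
    rcases key b _ hl hb with hx | hx | hx
    · tauto
    · exact Or.inr (Or.inr (Or.inr (Or.inr (Or.inr (Or.inl ⟨i, hx, h⟩)))))
    · tauto
  · obtain ⟨b, hl, hb⟩ := h.exists_cons hU
    rcases key b _ hl hb with hx | hx | hx <;> tauto

theorem good_iff_eq_of_L_mem (hU : Aword U) (hL : L ∈ l) : Good U l ↔ l = L :: U := by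
  refine ⟨fun h => ?_, Or.inl⟩
  rcases h.mem_cases hU hL with ⟨-, h⟩ | h | h | ⟨h, -⟩ | ⟨h, -⟩ | ⟨_, h, -⟩ | ⟨h, -⟩
  all_goals first | exact h | exact absurd h (by decide) | exact absurd h.symm (ti_ne _).1

theorem good_iff_isGWord_of_mem (hU : Aword U) (hg : g ∈ l) : Good U l ↔ IsGWord U l := by
  refine ⟨fun h => ?_, fun h => Or.inr (Or.inl h)⟩
  rcases h.mem_cases hU hg with ⟨h, -⟩ | h | h | ⟨-, h⟩ | ⟨h, -⟩ | ⟨_, h, -⟩ | ⟨h, -⟩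
  all_goals first | exact h | exact absurd h (by decide) | exact absurd h.symm (ti_ne _).2.2.1

theorem good_iff_isS1Word_of_mem (hU : Aword U) (hs : s1 ∈ l) : Good U l ↔ IsS1Word U l := by
  refine ⟨fun h => ?_, fun h => Or.inr (Or.inr (Or.inl h))⟩
  rcases h.mem_cases hU hs with ⟨h, -⟩ | h | h | ⟨h, -⟩ | ⟨-, h⟩ | ⟨_, h, -⟩ | ⟨h, -⟩
  all_goals first | exact h | exact absurd h (by decide) | exact absurd h.symm (ti_ne _).2.2.2.1

theorem good_iff_isS2Word_of_mem (hU : Aword U) (hs : s2 ∈ l) : Good U l ↔ IsS2Word U l := by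
  refine ⟨fun h => ?_, fun h => Or.inr (Or.inr (Or.inr (Or.inr h)))⟩
  rcases h.mem_cases hU hs with ⟨h, -⟩ | h | h | ⟨h, -⟩ | ⟨h, -⟩ | ⟨_, h, -⟩ | ⟨-, h⟩
  all_goals first | exact h | exact absurd h (by decide) | exact absurd h.symm (ti_ne _).2.2.2.2

theorem good_iff_isTWord_of_mem (hU : Aword U) (i : Fin 3) (ht : ti i ∈ l) :
    Good U l ↔ IsTWord U i l := by
  refine ⟨fun h => ?_, fun h => Or.inr (Or.inr (Or.inr (Or.inl ⟨i, h⟩)))⟩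
  have hne := ti_ne i
  have hfr := (isToken_ti i).not_isFrame.1
  rcases h.mem_cases hU ht with ⟨h, -⟩ | h | h | ⟨h, -⟩ | ⟨h, -⟩ | ⟨j, h, hj⟩ | ⟨h, -⟩
  · exact absurd h hne.1
  · exact absurd h hne.2.1
  · exact absurd h hfr
  · exact absurd h hne.2.2.1
  · exact absurd h hne.2.2.2.1
  · rwa [ti_injective h]
  · exact absurd h hne.2.2.2.2

theorem isGWord_swap (hU : Aword U) (ha : isA a) :
    IsGWord U (xl ++ [g, a] ++ yl) ↔ IsGWord U (xl ++ [a, g] ++ yl) := by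
  rw [show xl ++ [g, a] ++ yl = xl ++ g :: a :: yl by simp,
    show xl ++ [a, g] ++ yl = (xl ++ [a]) ++ g :: yl by simp,
    isGWord_append_g_iff hU, isGWord_append_g_iff hU]
  constructor
  · rintro ⟨U₀, U₁, rfl, rfl⟩
    exact ⟨U₀, U₁ ++ [a], by simp, by simp⟩
  · rintro ⟨U₀, U₁, rfl, h⟩
    obtain ⟨U₁, rfl, rfl⟩ := List.exists_eq_append_of_append_eq (X := M :: U₀) h
      (notMem_singleton_of_isA ha (by decide))
    exact ⟨U₀, U₁, by simp, rfl⟩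

theorem not_isGWord_of_not_isA (hU : Aword U) (hx : ¬ isA x) :
    ¬ IsGWord U (xl ++ [g, x] ++ yl) := by
  rw [show xl ++ [g, x] ++ yl = xl ++ g :: x :: yl by simp, isGWord_append_g_iff hU]
  rintro ⟨U₀, U₁, rfl, -⟩
  exact hx (hU x (by simp))

theorem isTokWord_swap (hU : Aword U) (ht : IsToken t) (hx : x = R ∨ isA x) :
    IsTokWord U t adm (xl ++ [t, x] ++ yl) ↔ IsTokWord U t adm (xl ++ [x, t] ++ yl) := by
  have hPQ : P ∉ [x] ∧ Q ∉ [x] := by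
    rcases hx with rfl | hx
    · decide
    · exact ⟨notMem_singleton_of_isA hx (by decide), notMem_singleton_of_isA hx (by decide)⟩
  rw [show xl ++ [t, x] ++ yl = xl ++ t :: x :: yl by simp,
    show xl ++ [x, t] ++ yl = (xl ++ [x]) ++ t :: yl by simp,
    isTokWord_append_iff hU ht, isTokWord_append_iff hU ht]
  constructor
  · rintro ⟨U₀, U₁, U₂, U₃, A, B, hdec, hAB, hadm, rfl, h⟩
    obtain ⟨B, rfl, rfl⟩ := List.exists_eq_append_of_append_eq' (s := [x]) h hPQ.2
    exact ⟨U₀, U₁, U₂, U₃, A ++ [x], B, hdec, by simpa using hAB, hadm, by simp, rfl⟩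
  · rintro ⟨U₀, U₁, U₂, U₃, A, B, hdec, hAB, hadm, h, rfl⟩
    obtain ⟨A, rfl, rfl⟩ := List.exists_eq_append_of_append_eq (X := M :: U₀) h hPQ.1
    exact ⟨U₀, U₁, U₂, U₃, A, x :: B, hdec, by simpa using hAB, hadm, rfl, rfl⟩

theorem isS2Word_swap (hU : Aword U) (ha : isA a) :
    IsS2Word U (xl ++ [s2, a] ++ yl) ↔ IsS2Word U (xl ++ [a, s2] ++ yl) := by
  rw [show xl ++ [s2, a] ++ yl = xl ++ s2 :: a :: yl by simp,
    show xl ++ [a, s2] ++ yl = (xl ++ [a]) ++ s2 :: yl by simp,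
    isS2Word_append_s2_iff hU, isS2Word_append_s2_iff hU]
  constructor
  · rintro ⟨U₀, A, B, U₂, U₃, rfl, hne, rfl, h⟩
    obtain ⟨B, rfl, rfl⟩ := List.exists_eq_append_of_append_eq' (s := [a]) h
      (notMem_singleton_of_isA ha (by decide))
    exact ⟨U₀, A ++ [a], B, U₂, U₃, by simp, by simp, by simp, rfl⟩
  · rintro ⟨U₀, A, B, U₂, U₃, rfl, hne, h, rfl⟩
    obtain ⟨A, rfl, rfl⟩ := List.exists_eq_append_of_append_eq (X := M :: U₀) h
      (notMem_singleton_of_isA ha (by decide))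
    exact ⟨U₀, A, a :: B, U₂, U₃, by simp, by simp, rfl, rfl⟩

theorem isS2Word_swap_R (hU : Aword U) (ha : isA a) :
    IsS2Word U (xl ++ [s2, R, a] ++ yl) ↔ IsS2Word U (xl ++ [a, s2, R] ++ yl) := by
  rw [show xl ++ [s2, R, a] ++ yl = xl ++ s2 :: R :: a :: yl by simp,
    show xl ++ [a, s2, R] ++ yl = (xl ++ [a]) ++ s2 :: R :: yl by simp,
    isS2Word_append_s2_iff hU, isS2Word_append_s2_iff hU]
  constructor
  · rintro ⟨U₀, A, B, U₂, U₃, rfl, -, rfl, h⟩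
    simp only [aword_append] at hU
    obtain ⟨⟨⟨⟨-, -⟩, hB⟩, h₂⟩, h₃⟩ := hU
    obtain ⟨rfl, hyl⟩ := List.eq_of_append_cons_eq_of_notMem (xl := []) h
      (notMem_of_aword hB (by decide)) (by simp [isA, notMem_of_aword h₂, notMem_of_aword h₃])
    obtain ⟨U₂, rfl, rfl⟩ := List.exists_eq_append_of_append_eq' (s := [a]) hyl
      (notMem_singleton_of_isA ha (by decide))
    exact ⟨U₀, A ++ [a], [], U₂, U₃, by simp, by simp, by simp, rfl⟩
  · rintro ⟨U₀, A, B, U₂, U₃, rfl, -, h, hyl⟩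
    simp only [aword_append] at hU
    obtain ⟨⟨⟨⟨-, -⟩, hB⟩, h₂⟩, h₃⟩ := hU
    obtain ⟨A, rfl, rfl⟩ := List.exists_eq_append_of_append_eq (X := M :: U₀) h
      (notMem_singleton_of_isA ha (by decide))
    obtain ⟨rfl, rfl⟩ := List.eq_of_append_cons_eq_of_notMem (xl := []) hyl
      (notMem_of_aword hB (by decide)) (by simp [isA, notMem_of_aword h₂, notMem_of_aword h₃])
    exact ⟨U₀, A, [], a :: U₂, U₃, by simp, by simp, by simp, by simp⟩

theorem isGWord_iff_isS1Word (hU : Aword U) (hsf : SqFree U) (ha : isA a) :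
    IsGWord U (xl ++ [a, g, b] ++ yl) ↔ IsS1Word U (xl ++ [a, R, s1, Q, b] ++ yl) := by
  rw [show xl ++ [a, g, b] ++ yl = (xl ++ [a]) ++ g :: b :: yl by simp,
    show xl ++ [a, R, s1, Q, b] ++ yl = (xl ++ [a, R]) ++ s1 :: Q :: b :: yl by simp,
    isGWord_append_g_iff hU, IsS1Word, isTokWord_append_iff hU (by simp [IsToken])]
  constructor
  · rintro ⟨U₀, U₁, rfl, h⟩
    obtain ⟨U₁, rfl, rfl⟩ := List.exists_eq_append_of_append_eq (X := M :: U₀) h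
      (notMem_singleton_of_isA ha (by decide))
    exact ⟨U₀, U₁ ++ [a], [], b :: yl, U₁ ++ [a, R], [], by simp, by simp,
      adm_of_sqFree hsf (by simp) ⟨U₀, [], by simp⟩, by simp, rfl⟩
  · rintro ⟨U₀, U₁, U₂, U₃, A, B, rfl, hAB, -, h, hyl⟩
    simp only [aword_append] at hU
    obtain ⟨⟨⟨h₀, h₁⟩, h₂⟩, h₃⟩ := hU
    obtain ⟨rfl, rfl⟩ := List.eq_of_append_cons_eq_of_notMem (xl := []) hyl
      (notMem_of_append_eq h₁ h₂ hAB (by decide) (by decide)).2 (notMem_of_aword h₃ (by decide))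
    obtain ⟨A, rfl, rfl⟩ := List.exists_eq_append_of_append_eq (X := M :: U₀) h
      (by simp [ne_of_isA ha (show ¬ isA P by decide)])
    obtain ⟨rfl, rfl⟩ := List.eq_of_append_cons_eq_of_notMem (xl := A ++ [a]) (yl := [])
      (by simpa using hAB) (notMem_of_aword h₁ (by decide)) (notMem_of_aword h₂ (by decide))
    exact ⟨U₀, A ++ [a], by simp, by simp⟩

theorem isTokWord_iff_isS1Word (hU : Aword U) (ht : IsToken t) (ha : isA a) :
    IsTokWord U t (TAdm a) (xl ++ [P, a, t] ++ yl) ↔ IsS1Word U (xl ++ [a, P, s1] ++ yl) := by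
  rw [show xl ++ [P, a, t] ++ yl = (xl ++ [P, a]) ++ t :: yl by simp,
    show xl ++ [a, P, s1] ++ yl = (xl ++ [a, P]) ++ s1 :: yl by simp,
    isTokWord_append_iff hU ht, IsS1Word, isTokWord_append_iff hU (by simp [IsToken])]
  constructor
  · rintro ⟨U₀, U₁, U₂, U₃, A, B, rfl, hAB, ⟨hne, hadm, -, -⟩, h, rfl⟩
    simp only [aword_append] at hU
    obtain ⟨⟨⟨h₀, h₁⟩, h₂⟩, -⟩ := hU
    obtain ⟨rfl, rfl⟩ := List.eq_of_append_cons_eq_of_notMem (X := M :: U₀) h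
      (by simp [notMem_of_aword h₀ (show ¬ isA P by decide)])
      (notMem_of_append_eq h₁ h₂ hAB (by decide) (by decide)).1
    obtain ⟨rfl, -⟩ | ⟨V, rfl, rfl⟩ := List.cons_eq_append_iff.mp hAB
    · exact absurd rfl hne
    exact ⟨U₀ ++ [a], V, U₂, U₃, [], V ++ R :: U₂, by simp, rfl, hadm V rfl, by simp, rfl⟩
  · rintro ⟨U₀, U₁, U₂, U₃, A, B, rfl, hAB, hadm, h, rfl⟩
    simp only [aword_append] at hU
    obtain ⟨⟨⟨h₀, h₁⟩, h₂⟩, -⟩ := hU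
    obtain ⟨hxl, rfl⟩ := List.eq_of_append_cons_eq_of_notMem (xl := xl ++ [a]) (yl := [])
      (X := M :: U₀) (by simpa using h) (by simp [notMem_of_aword h₀ (show ¬ isA P by decide)])
      (notMem_of_append_eq h₁ h₂ hAB (by decide) (by decide)).1
    obtain ⟨U₀, rfl, rfl⟩ := List.exists_eq_append_of_append_eq (X := []) hxl
      (notMem_singleton_of_isA ha (by decide))
    refine ⟨U₀, a :: U₁, U₂, U₃, [a], B, by simp, by simpa using hAB,
      ⟨List.cons_ne_nil _ _, ?_, fun _ _ => hadm.cons a, fun y hy => ?_⟩, rfl, rfl⟩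
    · rintro V ⟨⟩
      exact hadm
    · exact (List.cons_eq_cons.mp (hy : a :: (U₁ ++ U₂) = [y])).1.symm

theorem isTokWord_iff_isS2Word (hU : Aword U) (ht : IsToken t) (hb : isA b) (hab : b ≠ a) :
    IsTokWord U t (TAdm a) (xl ++ [P, b, t] ++ yl) ↔ IsS2Word U (xl ++ [b, P, s2] ++ yl) := by
  rw [show xl ++ [P, b, t] ++ yl = (xl ++ [P, b]) ++ t :: yl by simp,
    show xl ++ [b, P, s2] ++ yl = (xl ++ [b, P]) ++ s2 :: yl by simp,
    isTokWord_append_iff hU ht, isS2Word_append_s2_iff hU]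
  constructor
  · rintro ⟨U₀, U₁, U₂, U₃, A, B, rfl, hAB, ⟨hne, -, -, hsing⟩, h, rfl⟩
    simp only [aword_append] at hU
    obtain ⟨⟨⟨h₀, h₁⟩, h₂⟩, -⟩ := hU
    obtain ⟨rfl, rfl⟩ := List.eq_of_append_cons_eq_of_notMem (X := M :: U₀) h
      (by simp [notMem_of_aword h₀ (show ¬ isA P by decide)])
      (notMem_of_append_eq h₁ h₂ hAB (by decide) (by decide)).1
    obtain ⟨rfl, -⟩ | ⟨V, rfl, rfl⟩ := List.cons_eq_append_iff.mp hAB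
    · exact absurd rfl hne
    refine ⟨U₀ ++ [b], [], V, U₂, U₃, by simp, fun h => hab (hsing b ?_), by simp, by simp⟩
    simp_all
  · rintro ⟨U₀, A, B, U₂, U₃, rfl, hne, h, rfl⟩
    simp only [aword_append] at hU
    obtain ⟨⟨⟨⟨h₀, hA⟩, -⟩, -⟩, -⟩ := hU
    obtain ⟨hxl, rfl⟩ := List.eq_of_append_cons_eq_of_notMem (xl := xl ++ [b]) (yl := [])
      (X := M :: U₀) (by simpa using h) (by simp [notMem_of_aword h₀ (show ¬ isA P by decide)])
      (notMem_of_aword hA (by decide))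
    obtain ⟨U₀, rfl, rfl⟩ := List.exists_eq_append_of_append_eq (X := []) hxl
      (notMem_singleton_of_isA hb (by decide))
    refine ⟨U₀, b :: B, U₂, U₃, [b], B ++ R :: U₂, by simp, by simp,
      ⟨List.cons_ne_nil _ _, fun V hV => absurd (List.cons_eq_cons.mp hV).1 hab,
        fun _ _ => adm_cons_cons_of_ne hab, fun y hy => absurd ?_ hne⟩, rfl, by simp⟩
    simpa using (List.cons_eq_cons.mp (hy : b :: (B ++ U₂) = [y])).2

theorem isS1Word_iff_isTokWord (hU : Aword U) (ht : IsToken t) (ha : isA a) :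
    IsS1Word U (xl ++ [s1, Q, a] ++ yl) ↔ IsTokWord U t (TAdm a) (xl ++ [t, a, Q] ++ yl) := by
  rw [show xl ++ [s1, Q, a] ++ yl = xl ++ s1 :: Q :: a :: yl by simp,
    show xl ++ [t, a, Q] ++ yl = xl ++ t :: a :: Q :: yl by simp,
    IsS1Word, isTokWord_append_iff hU (by simp [IsToken]), isTokWord_append_iff hU ht]
  constructor
  · rintro ⟨U₀, U₁, U₂, U₃, A, B, rfl, hAB, hadm, rfl, h⟩
    simp only [aword_append] at hU
    obtain ⟨⟨⟨-, h₁⟩, h₂⟩, h₃⟩ := hU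
    obtain ⟨rfl, rfl⟩ := List.eq_of_append_cons_eq_of_notMem (xl := []) h
      (notMem_of_append_eq h₁ h₂ hAB (by decide) (by decide)).2 (notMem_of_aword h₃ (by decide))
    rw [List.append_nil] at hAB
    subst hAB
    refine ⟨U₀, U₁, U₂ ++ [a], yl, U₁ ++ R :: U₂, [a], by simp, by simp,
      ⟨hadm.1, fun V hV => (hV ▸ hadm).of_cons, fun _ _ => hadm, fun y hy => ?_⟩, rfl, rfl⟩
    simp [List.append_eq_singleton_iff, hadm.1] at hy
  · rintro ⟨U₀, U₁, U₂, U₃, A, B, rfl, hAB, hadm, rfl, h⟩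
    simp only [aword_append] at hU
    obtain ⟨⟨⟨-, h₁⟩, h₂⟩, h₃⟩ := hU
    obtain ⟨rfl, rfl⟩ := List.eq_of_append_cons_eq_of_notMem (xl := [a]) h
      (notMem_of_append_eq h₁ h₂ hAB (by decide) (by decide)).2 (notMem_of_aword h₃ (by decide))
    obtain ⟨V, rfl, rfl⟩ := List.exists_eq_append_of_append_eq (X := U₁) hAB
      (notMem_singleton_of_isA ha (by decide))
    exact ⟨U₀, U₁, V, a :: yl, U₁ ++ R :: V, [], by simp, by simp, hadm.2.2.1 V rfl, rfl, rfl⟩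

theorem isS2Word_iff_isTokWord (hU : Aword U) (hsf : SqFree U) (ht : IsToken t) :
    IsS2Word U (xl ++ [s2, R, Q, a] ++ yl) ↔
      IsTokWord U t (TAdm a) (xl ++ [R, t, a, Q] ++ yl) := by
  rw [show xl ++ [s2, R, Q, a] ++ yl = xl ++ s2 :: R :: Q :: a :: yl by simp,
    show xl ++ [R, t, a, Q] ++ yl = (xl ++ [R]) ++ t :: a :: Q :: yl by simp,
    isS2Word_append_s2_iff hU, isTokWord_append_iff hU ht]
  constructor
  · rintro ⟨U₀, A, B, U₂, U₃, rfl, hne, rfl, h⟩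
    have hblocks := hU
    simp only [aword_append] at hblocks
    obtain ⟨⟨⟨⟨-, -⟩, hB⟩, h₂⟩, h₃⟩ := hblocks
    obtain ⟨rfl, hQ⟩ := List.eq_of_append_cons_eq_of_notMem (xl := []) h
      (notMem_of_aword hB (by decide)) (by simp [isA, notMem_of_aword h₂, notMem_of_aword h₃])
    obtain ⟨rfl, rfl⟩ := List.eq_of_append_cons_eq_of_notMem (xl := []) hQ
      (notMem_of_aword h₂ (by decide)) (notMem_of_aword h₃ (by decide))
    have hA : A ≠ [] := by simpa using hne
    have hadm : Adm A (a :: yl) := adm_of_sqFree hsf hA ⟨U₀, [], by simp⟩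
    refine ⟨U₀, A, [a], yl, A ++ [R], [a], by simp, by simp,
      ⟨hA, fun V hV => (hV ▸ hadm).of_cons, fun _ _ => hadm, fun y hy => ?_⟩, by simp, rfl⟩
    simp [List.append_eq_singleton_iff, hA] at hy
  · rintro ⟨U₀, U₁, U₂, U₃, A, B, rfl, hAB, hadm, h, hyl⟩
    simp only [aword_append] at hU
    obtain ⟨⟨⟨-, h₁⟩, h₂⟩, h₃⟩ := hU
    obtain ⟨A, rfl, rfl⟩ := List.exists_eq_append_of_append_eq (X := M :: U₀) h (by simp)
    obtain ⟨rfl, rfl⟩ := List.eq_of_append_cons_eq_of_notMem (xl := [a]) hyl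
      (notMem_of_append_eq h₁ h₂ hAB (by decide) (by decide)).2 (notMem_of_aword h₃ (by decide))
    obtain ⟨rfl, rfl⟩ := List.eq_of_append_cons_eq_of_notMem (xl := A) (yl := [a])
      (by simpa using hAB) (notMem_of_aword h₁ (by decide)) (notMem_of_aword h₂ (by decide))
    exact ⟨U₀, A, [], [], a :: yl, by simp, by simpa using hadm.1, by simp, by simp⟩

theorem not_isS1Word_P_R_s1 (hU : Aword U) : ¬ IsS1Word U (xl ++ [P, R, s1] ++ yl) := by
  rw [show xl ++ [P, R, s1] ++ yl = (xl ++ [P, R]) ++ s1 :: yl by simp, IsS1Word,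
    isTokWord_append_iff hU (by simp [IsToken])]
  rintro ⟨U₀, U₁, U₂, U₃, A, B, rfl, hAB, hadm, h, -⟩
  simp only [aword_append] at hU
  obtain ⟨⟨⟨h₀, h₁⟩, h₂⟩, -⟩ := hU
  obtain ⟨-, rfl⟩ := List.eq_of_append_cons_eq_of_notMem (X := M :: U₀) h
    (by simp [notMem_of_aword h₀ (show ¬ isA P by decide)])
    (notMem_of_append_eq h₁ h₂ hAB (by decide) (by decide)).1
  obtain ⟨rfl, -⟩ := List.eq_of_append_cons_eq_of_notMem (xl := []) hAB
    (notMem_of_aword h₁ (by decide)) (notMem_of_aword h₂ (by decide))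
  exact hadm.1 rfl

theorem Good.mem_tail (hU : Aword U) (h : Good U l) (hx : x ∈ l.tail) : IsFrame x ∨ IsToken x := by
  have key : ∀ b t, IsToken t → l = M :: b → (∀ y ∈ b, y = t ∨ IsFrame y) →
      IsFrame x ∨ IsToken x := fun b t ht hl hb => by
    rw [hl, List.tail_cons] at hx
    rcases hb x hx with rfl | hx
    exacts [Or.inr ht, Or.inl hx]
  rcases h with rfl | h | h | ⟨i, h⟩ | h
  · exact Or.inl (Or.inr (Or.inr (Or.inr (hU x hx))))
  · obtain ⟨b, hl, hb⟩ := h.exists_cons hU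
    exact key b g (by simp [IsToken]) hl hb
  · obtain ⟨b, hl, hb⟩ := h.exists_cons hU
    exact key b s1 (by simp [IsToken]) hl hb
  · obtain ⟨b, hl, hb⟩ := h.exists_cons hU
    exact key b _ (isToken_ti i) hl hb
  · obtain ⟨b, hl, hb⟩ := h.exists_cons hU
    exact key b s2 (by simp [IsToken]) hl hb

theorem mem_tail_append_pair (y : Phi) : y ∈ (xl ++ [x, y] ++ yl).tail := by
  cases xl <;> simp

theorem not_good_xL (hU : Aword U) : ¬ Good U (xl ++ [x, L] ++ yl) := fun h => by
  rcases h.mem_tail hU (mem_tail_append_pair L) with h | h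
  · exact absurd h (by decide)
  · exact absurd h (by simp [IsToken])

theorem not_good_xM (hU : Aword U) : ¬ Good U (xl ++ [x, M] ++ yl) := fun h => by
  rcases h.mem_tail hU (mem_tail_append_pair M) with h | h
  · exact absurd h (by decide)
  · exact absurd h (by simp [IsToken])

theorem good_L_iff_good_MPg (hU : Aword U) :
    Good U (xl ++ [L] ++ yl) ↔ Good U (xl ++ [M, P, g] ++ yl) := by
  rw [good_iff_eq_of_L_mem hU (by simp), good_iff_isGWord_of_mem hU (by simp),
    show xl ++ [M, P, g] ++ yl = (xl ++ [M, P]) ++ g :: yl by simp, isGWord_append_g_iff hU]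
  constructor
  · intro h
    obtain ⟨rfl, rfl⟩ := List.eq_of_append_cons_eq_of_notMem (X := []) (by simpa using h)
      List.not_mem_nil (notMem_of_aword hU (by decide))
    exact ⟨[], [], by simp, rfl⟩
  · rintro ⟨U₀, U₁, rfl, h⟩
    simp only [aword_append] at hU
    obtain ⟨⟨h₀, h₁⟩, -⟩ := hU
    obtain ⟨hxl, rfl⟩ := List.eq_of_append_cons_eq_of_notMem (xl := xl ++ [M]) (yl := [])
      (X := M :: U₀) (by simpa using h) (by simp [notMem_of_aword h₀ (show ¬ isA P by decide)])
      (notMem_of_aword h₁ (by decide))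
    obtain ⟨rfl, rfl⟩ := List.eq_of_append_cons_eq_of_notMem (xl := xl) (yl := []) (X := [])
      hxl List.not_mem_nil (notMem_of_aword h₀ (by decide))
    simp

theorem w_mul (l₁ l₂ : List Phi) : w l₁ * w l₂ = w (l₁ ++ l₂) := by
  simp [w, FreeMonoid.ofList_append]

theorem w_injective : Function.Injective w := fun l₁ l₂ h => by
  simpa using congrArg FreeMonoid.toList (WithZero.coe_inj.mp h)

theorem eq_zero_or_exists_eq_w (z : W0) : z = 0 ∨ ∃ l, z = w l := by
  induction z using WithZero.recZeroCoe with
  | zero => exact Or.inl rfl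
  | coe f => exact Or.inr ⟨FreeMonoid.toList f, by simp [w]⟩

def goodSet (U : List Phi) : Set W0 := w '' {l | Good U l}

theorem w_mem_goodSet : w l ∈ goodSet U ↔ Good U l := w_injective.mem_set_image

theorem zero_notMem_goodSet : (0 : W0) ∉ goodSet U := by
  rintro ⟨l, -, h⟩
  exact WithZero.coe_ne_zero h

theorem mem_goodSet_iff_of_rel (hU : Aword U) (hsf : SqFree U) {u v : W0} (huv : rel u v)
    (x y : W0) : x * u * y ∈ goodSet U ↔ x * v * y ∈ goodSet U := by
  rcases eq_zero_or_exists_eq_w x with rfl | ⟨xl, rfl⟩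
  · simp
  rcases eq_zero_or_exists_eq_w y with rfl | ⟨yl, rfl⟩
  · simp
  cases huv <;>
    simp only [w_mul, mul_zero, zero_mul, w_mem_goodSet, zero_notMem_goodSet, iff_false]
  case r1L => exact not_good_xL hU
  case r1M => exact not_good_xM hU
  case r2 => exact good_L_iff_good_MPg hU
  case r3 i =>
    refine (good_iff_isGWord_of_mem hU ?_).trans
      ((isGWord_swap hU (isA_ai i)).trans (good_iff_isGWord_of_mem hU ?_).symm) <;> simp
  case r4 hx =>
    exact fun h => not_isGWord_of_not_isA hU hx ((good_iff_isGWord_of_mem hU (by simp)).mp h)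
  case r5 i j =>
    refine (good_iff_isGWord_of_mem hU ?_).trans
      ((isGWord_iff_isS1Word hU hsf (isA_ai i)).trans
        (good_iff_isS1Word_of_mem hU ?_).symm) <;> simp
  case r6 i x hx =>
    refine (good_iff_isTWord_of_mem hU i ?_).trans
      ((isTokWord_swap hU (isToken_ti i) hx).trans (good_iff_isTWord_of_mem hU i ?_).symm) <;> simp
  case r7 i =>
    refine (good_iff_isTWord_of_mem hU i ?_).trans
      ((isTokWord_iff_isS1Word hU (isToken_ti i) (isA_ai i)).trans
        (good_iff_isS1Word_of_mem hU ?_).symm) <;> simp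
  case r8 i j hij =>
    refine (good_iff_isTWord_of_mem hU i ?_).trans
      ((isTokWord_iff_isS2Word hU (isToken_ti i) (isA_ai j) (ai_injective.ne hij.symm)).trans
        (good_iff_isS2Word_of_mem hU ?_).symm) <;> simp
  case r9 i j =>
    fin_cases j
    · refine (good_iff_isS1Word_of_mem hU ?_).trans
        ((isTokWord_swap hU (by simp [IsToken]) (Or.inr (isA_ai i))).trans
          (good_iff_isS1Word_of_mem hU ?_).symm) <;> simp [si]
    · refine (good_iff_isS2Word_of_mem hU ?_).trans
        ((isS2Word_swap hU (isA_ai i)).trans (good_iff_isS2Word_of_mem hU ?_).symm) <;> simp [si]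
  case r10 =>
    refine (good_iff_isS1Word_of_mem hU ?_).trans
      ((isTokWord_swap hU (by simp [IsToken]) (Or.inl rfl)).trans
        (good_iff_isS1Word_of_mem hU ?_).symm) <;> simp
  case r11 i =>
    refine (good_iff_isS1Word_of_mem hU ?_).trans
      ((isS1Word_iff_isTokWord hU (isToken_ti i) (isA_ai i)).trans
        (good_iff_isTWord_of_mem hU i ?_).symm) <;> simp
  case r12 => exact fun h => not_isS1Word_P_R_s1 hU ((good_iff_isS1Word_of_mem hU (by simp)).mp h)
  case r13 i =>
    refine (good_iff_isS2Word_of_mem hU ?_).trans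
      ((isS2Word_swap_R hU (isA_ai i)).trans (good_iff_isS2Word_of_mem hU ?_).symm) <;> simp
  case r14 i =>
    refine (good_iff_isS2Word_of_mem hU ?_).trans
      ((isS2Word_iff_isTokWord hU hsf (isToken_ti i)).trans
        (good_iff_isTWord_of_mem hU i ?_).symm) <;> simp

end H

/-- if `U` is a square-free word in `a1,a2,a3`, then `L·U ≠ 0` in `H`. -/
theorem stmt12 (U : List Phi) (hU : Aword U) (hsf : SqFree U) :
    q (w (L :: U)) ≠ q 0 := by
  intro h
  have hmem := Con.mem_iff_of_conGen (fun _ _ => H.mem_goodSet_iff_of_rel hU hsf)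
    ((Con.eq hCon).mp h)
  exact H.zero_notMem_goodSet (hmem.mp (H.w_mem_goodSet.mpr (Or.inl rfl)))
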